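/- Let β₁ = (0 2)(1 3)(4 5)(6 10)(7 9)(8 11), β₂ = (0 4 3)(1 2 5)(6 8 9)(7 10 11), β₃ = (0 6)(1 11)(2 10)(3 8)(4 9)(5 7) be permutations of {0,…,11}. Then the subgroup of the symmetric group on 12 letters generated by {β₁, β₂, β₃} has exactly 12 elements and is isomorphic to the dihedral group of order 12. -/
import Mathlib

set_option maxRecDepth 4000

open Equiv

/-- β₁ = (0 2)(1 3)(4 5)(6 10)(7 9)(8 11) -/
def ko2Beta1 : Equiv.Perm (Fin 12) :=
  swap 0 2 * swap 1 3 * swap 4 5 * swap 6 10 * swap 7 9 * swap 8 11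

/-- β₂ = (0 4 3)(1 2 5)(6 8 9)(7 10 11) -/
def ko2Beta2 : Equiv.Perm (Fin 12) :=
  (swap 0 4 * swap 4 3) * (swap 1 2 * swap 2 5) * (swap 6 8 * swap 8 9) *
    (swap 7 10 * swap 10 11)

/-- β₃ = (0 6)(1 11)(2 10)(3 8)(4 9)(5 7) -/
def ko2Beta3 : Equiv.Perm (Fin 12) :=
  swap 0 6 * swap 1 11 * swap 2 10 * swap 3 8 * swap 4 9 * swap 5 7

/-- ρ = β₁β₂, an element of order 6. -/
def ko2Rho : Equiv.Perm (Fin 12) := ko2Beta1 * ko2Beta2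

def ko2f : DihedralGroup 6 → Equiv.Perm (Fin 12)
  | .r i => ko2Rho ^ i.val
  | .sr i => ko2Beta3 * ko2Rho ^ i.val

def ko2Phi : DihedralGroup 6 →* Equiv.Perm (Fin 12) where
  toFun := ko2f
  map_one' := by decide
  map_mul' := by decide

lemma ko2Phi_injective : Function.Injective ko2Phi := by
  intro a b h
  revert h
  revert a b
  decide

lemma ko2Range_eq : ko2Phi.range =
    Subgroup.closure ({ko2Beta1, ko2Beta2, ko2Beta3} : Set (Equiv.Perm (Fin 12))) := by
  apply le_antisymm
  · rintro x ⟨d, rfl⟩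
    have h1 : ko2Beta1 ∈ Subgroup.closure
        ({ko2Beta1, ko2Beta2, ko2Beta3} : Set (Equiv.Perm (Fin 12))) :=
      Subgroup.subset_closure (by simp)
    have h2 : ko2Beta2 ∈ Subgroup.closure
        ({ko2Beta1, ko2Beta2, ko2Beta3} : Set (Equiv.Perm (Fin 12))) :=
      Subgroup.subset_closure (by simp)
    have h3 : ko2Beta3 ∈ Subgroup.closure
        ({ko2Beta1, ko2Beta2, ko2Beta3} : Set (Equiv.Perm (Fin 12))) :=
      Subgroup.subset_closure (by simp)
    have hρ : ko2Rho ∈ Subgroup.closure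
        ({ko2Beta1, ko2Beta2, ko2Beta3} : Set (Equiv.Perm (Fin 12))) := mul_mem h1 h2
    cases d with
    | r i => exact pow_mem hρ i.val
    | sr i => exact mul_mem h3 (pow_mem hρ i.val)
  · rw [Subgroup.closure_le]
    intro x hx
    rcases hx with h | h | h
    · exact ⟨DihedralGroup.r 3, by rw [h]; decide⟩
    · exact ⟨DihedralGroup.r 4, by rw [h]; decide⟩
    · exact ⟨DihedralGroup.sr 0, by rw [h]; decide⟩

theorem stmt13 :
    Nat.card (Subgroup.closure
        ({ko2Beta1, ko2Beta2, ko2Beta3} : Set (Equiv.Perm (Fin 12)))) = 12 ∧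
    Nonempty ((Subgroup.closure
        ({ko2Beta1, ko2Beta2, ko2Beta3} : Set (Equiv.Perm (Fin 12)))) ≃*
      DihedralGroup 6) := by
  have e : DihedralGroup 6 ≃* (Subgroup.closure
      ({ko2Beta1, ko2Beta2, ko2Beta3} : Set (Equiv.Perm (Fin 12)))) :=
    (MonoidHom.ofInjective ko2Phi_injective).trans (MulEquiv.subgroupCongr ko2Range_eq)
  constructor
  · rw [Nat.card_congr e.symm.toEquiv, Nat.card_eq_fintype_card, DihedralGroup.card]
  · exact ⟨e.symm⟩
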